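/- Let Σ* := {v ∈ ℝ^U : Λ(v) is positive semidefinite} and Σ := {s ∈ ℝ^U : sᵀv ≥ 0 for all v ∈ Σ*}. Suppose L ≥ 2, Λ(x) is positive definite, t lies in the topological interior of Σ, and tᵀ(x·xᵀ − (L − 1)·H(x)⁻¹)·t ≥ 0. Then Λ(H(x)⁻¹·t) is positive semidefinite (i.e., x is a dual certificate of t). -/

import Mathlib

open Matrix

/-- The gradient of the barrier `f(x) = -log det Λ(x)`:
`g(x)_i = -tr(Λ(x)⁻¹ · Λ(e_i))` (with the total matrix inverse, `0` for singular matrices). -/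
noncomputable def grad {U L : ℕ} (Lam : (Fin U → ℝ) →ₗ[ℝ] Matrix (Fin L) (Fin L) ℝ)
    (x : Fin U → ℝ) : Fin U → ℝ :=
  fun i => -((Lam x)⁻¹ * Lam (Pi.single i 1)).trace

/-- The Hessian of the barrier: `H(x)_{ij} = tr(Λ(x)⁻¹ Λ(e_i) Λ(x)⁻¹ Λ(e_j))`. -/
noncomputable def hess {U L : ℕ} (Lam : (Fin U → ℝ) →ₗ[ℝ] Matrix (Fin L) (Fin L) ℝ)
    (x : Fin U → ℝ) : Matrix (Fin U) (Fin U) ℝ :=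
  Matrix.of fun i j =>
    ((Lam x)⁻¹ * Lam (Pi.single i 1) * (Lam x)⁻¹ * Lam (Pi.single j 1)).trace

/-- The local norm `‖v‖_x = (vᵀ H(x) v)^{1/2}`. -/
noncomputable def locNorm {U L : ℕ} (Lam : (Fin U → ℝ) →ₗ[ℝ] Matrix (Fin L) (Fin L) ℝ)
    (x v : Fin U → ℝ) : ℝ :=
  Real.sqrt (v ⬝ᵥ (hess Lam x).mulVec v)

/-- The dual local norm `‖t‖*_x = (tᵀ H(x)⁻¹ t)^{1/2}`. -/
noncomputable def dualNorm {U L : ℕ} (Lam : (Fin U → ℝ) →ₗ[ℝ] Matrix (Fin L) (Fin L) ℝ)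
    (x t : Fin U → ℝ) : ℝ :=
  Real.sqrt (t ⬝ᵥ (hess Lam x)⁻¹.mulVec t)

/-!
Whitening by `P = Λ(x)^{-1/2}` turns `w := H(x)⁻¹ t` into the symmetric matrix `S = P Λ(w) P`,
with `tr S = xᵀt` and `tr S² = tᵀH(x)⁻¹t`; the hypothesis then reads `(L - 1) tr S² ≤ (tr S)²`.
By Cauchy–Schwarz this forces all eigenvalues of `S` to have the same sign. If they are all
`≤ 0`, then `-w ∈ Σ*`, so `t ∈ Σ` gives `tr S² = tᵀw ≤ 0` and `S = 0`. Either way `S`, hence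
`Λ(w)`, is positive semidefinite.
-/

open Finset
open scoped ComplexOrder

theorem nonneg_or_nonpos_of_card_sub_one_mul_sum_sq_le {ι : Type*} [Fintype ι] (μ : ι → ℝ)
    (h : ((Fintype.card ι : ℝ) - 1) * ∑ i, μ i ^ 2 ≤ (∑ i, μ i) ^ 2) :
    (∀ i, 0 ≤ μ i) ∨ (∀ i, μ i ≤ 0) := by
  classical
  by_contra! ⟨⟨j, hj⟩, k, hk⟩
  -- Cauchy–Schwarz on the coordinates other than `m`, combined with `h`.
  have key (m : ι) : (Fintype.card ι : ℝ) * μ m ^ 2 ≤ 2 * μ m * ∑ i, μ i := by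
    have hcard : ((univ.erase m).card : ℝ) = Fintype.card ι - 1 := by
      rw [card_erase_of_mem (mem_univ m), Nat.cast_sub (card_pos.2 ⟨m, mem_univ m⟩), card_univ,
        Nat.cast_one]
    have hCS := sq_sum_le_card_mul_sum_sq (s := univ.erase m) (f := μ)
    rw [hcard] at hCS
    rw [← add_sum_erase _ _ (mem_univ m)] at h ⊢
    rw [← add_sum_erase _ _ (mem_univ m)] at h
    nlinarith
  have hn : (0 : ℝ) < Fintype.card ι := by exact_mod_cast Fintype.card_pos_iff.2 ⟨j⟩
  nlinarith [key j, key k, mul_pos hn (mul_pos_of_neg_of_neg hj hj), mul_pos hn (mul_pos hk hk)]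

namespace Matrix

variable {n 𝕜 : Type*} [Fintype n] [DecidableEq n] [RCLike 𝕜] {A : Matrix n n 𝕜}

theorem IsHermitian.trace_mul_self_eq_sum_eigenvalues_sq (hA : A.IsHermitian) :
    (A * A).trace = ∑ i, (hA.eigenvalues i : 𝕜) ^ 2 := by
  conv_lhs => rw [hA.spectral_theorem, ← map_mul, Unitary.conjStarAlgAut_apply]
  rw [trace_mul_cycle, Unitary.coe_star_mul_self, one_mul, diagonal_mul_diagonal, trace_diagonal]
  simp [sq]

theorem IsHermitian.posSemidef_neg_iff_eigenvalues_nonpos (hA : A.IsHermitian) :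
    (-A).PosSemidef ↔ hA.eigenvalues ≤ 0 := by
  conv_lhs => rw [hA.spectral_theorem, ← map_neg, diagonal_neg]
  simp [Unitary.isUnit_coe.posSemidef_star_right_conjugate_iff, posSemidef_diagonal_iff, Pi.le_def]

theorem IsHermitian.posSemidef_or_posSemidef_neg_of_card_sub_one_mul_trace_mul_self_le
    {A : Matrix n n ℝ} (hA : A.IsHermitian)
    (h : ((Fintype.card n : ℝ) - 1) * (A * A).trace ≤ A.trace ^ 2) :
    A.PosSemidef ∨ (-A).PosSemidef := by
  rw [hA.trace_mul_self_eq_sum_eigenvalues_sq, hA.trace_eq_sum_eigenvalues] at h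
  rw [hA.posSemidef_iff_eigenvalues_nonneg, hA.posSemidef_neg_iff_eigenvalues_nonpos]
  simpa [Pi.le_def] using nonneg_or_nonpos_of_card_sub_one_mul_sum_sq_le _ h

open scoped MatrixOrder in
theorem PosDef.exists_isHermitian_isUnit_mul_self_eq (hA : A.PosDef) :
    ∃ P : Matrix n n 𝕜, P.IsHermitian ∧ IsUnit P ∧ P * P = A :=
  ⟨CFC.sqrt A, (CFC.sqrt_nonneg A).posSemidef.isHermitian,
    (CFC.isUnit_sqrt_iff A hA.posSemidef.nonneg).2 hA.isUnit,
    CFC.sqrt_mul_sqrt_self A hA.posSemidef.nonneg⟩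

end Matrix

section Whitening

variable {U L : ℕ} (Lam : (Fin U → ℝ) →ₗ[ℝ] Matrix (Fin L) (Fin L) ℝ) (x : Fin U → ℝ)

theorem dotProduct_hess_mulVec (v w : Fin U → ℝ) :
    v ⬝ᵥ hess Lam x *ᵥ w = ((Lam x)⁻¹ * Lam v * (Lam x)⁻¹ * Lam w).trace := by
  have hv : v = ∑ i, v i • Pi.single i 1 := by ext; simp [Pi.single_apply]
  have hw : w = ∑ j, w j • Pi.single j 1 := by ext; simp [Pi.single_apply]
  conv_rhs => rw [hv, hw]
  simp only [map_sum, map_smul, Matrix.sum_mul, Matrix.mul_smul, Matrix.smul_mul,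
    Matrix.trace_sum, Matrix.trace_smul, smul_eq_mul, dotProduct, mulVec, hess, of_apply,
    Finset.mul_sum]
  rw [Finset.sum_comm]
  exact Finset.sum_congr rfl fun i _ => Finset.sum_congr rfl fun j _ => by ring

variable {Lam x} {P : Matrix (Fin L) (Fin L) ℝ} (hPP : P * P = (Lam x)⁻¹)
include hPP

theorem dotProduct_hess_mulVec_eq_trace_whitened (v w : Fin U → ℝ) :
    v ⬝ᵥ hess Lam x *ᵥ w = (P * Lam v * P * (P * Lam w * P)).trace := by
  rw [dotProduct_hess_mulVec, ← hPP]
  simp only [mul_assoc]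
  rw [trace_mul_comm]
  simp only [mul_assoc]

theorem self_dotProduct_hess_mulVec_eq_trace_whitened (hx : IsUnit (Lam x))
    (w : Fin U → ℝ) : x ⬝ᵥ hess Lam x *ᵥ w = (P * Lam w * P).trace := by
  rw [dotProduct_hess_mulVec, nonsing_inv_mul _ ((Lam x).isUnit_iff_isUnit_det.1 hx), one_mul,
    ← hPP, mul_assoc, trace_mul_comm]

end Whitening

theorem stmt9_general {U L : ℕ}
    (Lam : (Fin U → ℝ) →ₗ[ℝ] Matrix (Fin L) (Fin L) ℝ)
    (hsym : ∀ v, (Lam v).IsSymm)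
    (x : Fin U → ℝ) (hx : (Lam x).PosDef) (t : Fin U → ℝ)
    (ht : t ∈ interior {s : Fin U → ℝ | ∀ v, (Lam v).PosSemidef → 0 ≤ s ⬝ᵥ v})
    (hineq : 0 ≤ (x ⬝ᵥ t) ^ 2 - ((L : ℝ) - 1) * (t ⬝ᵥ (hess Lam x)⁻¹.mulVec t)) :
    (Lam ((hess Lam x)⁻¹.mulVec t)).PosSemidef := by
  set H := hess Lam x
  by_cases hH : IsUnit H.det
  swap
  · simpa [nonsing_inv_apply_not_isUnit _ hH] using PosSemidef.zero
  set w := H⁻¹ *ᵥ t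
  have hHw : H *ᵥ w = t := by rw [mulVec_mulVec, mul_nonsing_inv _ hH, one_mulVec]
  obtain ⟨P, hP, hPunit, hPP⟩ := hx.inv.exists_isHermitian_isUnit_mul_self_eq
  have hconj (v) : (Lam v).PosSemidef ↔ (P * Lam v * P).PosSemidef := by
    rw [← hPunit.posSemidef_star_right_conjugate_iff, star_eq_conjTranspose, hP.eq]
  set S := P * Lam w * P
  have hS : S.IsHermitian := by
    simp only [S, IsHermitian, conjTranspose_mul, hP.eq, (isHermitian_iff_isSymm.2 (hsym w)).eq,
      mul_assoc]
  have hxt : x ⬝ᵥ t = S.trace := by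
    rw [← hHw, self_dotProduct_hess_mulVec_eq_trace_whitened hPP hx.isUnit]
  have htw : t ⬝ᵥ w = (S * S).trace := by
    rw [← hHw, dotProduct_comm, dotProduct_hess_mulVec_eq_trace_whitened hPP]
  suffices S.PosSemidef from (hconj w).2 this
  rcases hS.posSemidef_or_posSemidef_neg_of_card_sub_one_mul_trace_mul_self_le
    (by rw [Fintype.card_fin, ← hxt, ← htw]; linarith) with hS_psd | hS_nsd
  · exact hS_psd
  have hneg : 0 ≤ t ⬝ᵥ -w := interior_subset ht _ ((hconj _).2 (by simpa [S] using hS_nsd))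
  have htr : (Sᴴ * S).trace = 0 := by
    have := (posSemidef_conjTranspose_mul_self S).trace_nonneg
    rw [hS.eq] at this ⊢
    linarith [dotProduct_neg t w]
  rw [trace_conjTranspose_mul_self_eq_zero_iff.1 htr]
  exact .zero

/-- conic sufficient condition for dual certificates:
if `t` is interior to `Σ` and `tᵀ(xxᵀ − (L−1)H(x)⁻¹)t ≥ 0`, then `x ∈ C(t)`. -/
theorem stmt9 {U L : ℕ} (hU : 0 < U) (hL : 2 ≤ L)
    (Lam : (Fin U → ℝ) →ₗ[ℝ] Matrix (Fin L) (Fin L) ℝ)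
    (hinj : Function.Injective Lam) (hsym : ∀ v, (Lam v).IsSymm)
    (x : Fin U → ℝ) (hx : (Lam x).PosDef) (t : Fin U → ℝ)
    (ht : t ∈ interior {s : Fin U → ℝ | ∀ v, (Lam v).PosSemidef → 0 ≤ s ⬝ᵥ v})
    (hineq : 0 ≤ (x ⬝ᵥ t) ^ 2 - ((L : ℝ) - 1) * (t ⬝ᵥ (hess Lam x)⁻¹.mulVec t)) :
    (Lam ((hess Lam x)⁻¹.mulVec t)).PosSemidef :=
  stmt9_general Lam hsym x hx t ht hineq
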